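/- arXiv:0710.3296 — 2 statements merged into one kernel-verified Lean document; each statement's English description precedes it below -/
import Mathlib

section
/- Let s > 0, n ≥ 1. Let P_1,…,P_n be i.i.d. Poisson(1) random variables and let (ΔC_1,…,ΔC_n) be a random vector of nonpositive integers whose conditional law given (P_1,…,P_n) = (p_1,…,p_n) with ∑ p_i = n + s is P(ΔC_k = −c_k for all k | P_i = p_i for all i) = (∏_{i=1}^n C(p_i, c_i) 1_{c_i ≤ p_i}) / C(∑ p_i, s) for nonnegative integers c_1,…,c_n summing to s (and 0 otherwise). Then for all nonnegative integers j_1,…,j_n with ∑ j_i = n, P(P_i + ΔC_i = j_i for all i | ∑_{k=1}^n P_k = n + s) = P(P_i = j_i for all i | ∑_{k=1}^n P_k = n). That is, conditionally on S_n = s the corrected vector (P_i + ΔC_i) is distributed as (P_i) conditioned by S_n = 0, where S_n = ∑_{k=1}^n (P_k − 1). -/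
open MeasureTheory ProbabilityTheory
open scoped ENNReal NNReal

/-! Given `P = p` on the level `∑ p = n + s`, the correction removes a uniformly random `s`-subset
of the balls, so by Vandermonde's identity `ΔC = -c` for some `c` with `∑ c = s` almost surely.
Hence `P + ΔC = j` exactly when `P = j + c` and `ΔC = -c` for such a `c`, and
`P(P + ΔC = j, S_n = s) = ∑_c e^{-n} ∏ 1/(j_i + c_i)! · ∏ C(j_i + c_i, c_i) / C(n + s, s)
  = e^{-n} ∏ 1/j_i! · n^s / (s! C(n + s, s))`,
the last step by the multinomial theorem `∑_c ∏ 1/c_i! = n^s/s!`. Dividing by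
`P(S_n = s) = e^{-n} n^(n+s)/(n+s)!` leaves `∏ 1/j_i! · n!/n^n = P(P = j | S_n = 0)`. -/

open Finset Real
open scoped Nat

theorem Nat.inv_factorial_add_mul_choose (a b : ℕ) :
    ((a + b)! : ℝ)⁻¹ * (a + b).choose b = (a ! : ℝ)⁻¹ * (b ! : ℝ)⁻¹ := by
  have hchoose : ((a + b).choose b : ℝ) ≠ 0 := by
    exact_mod_cast (Nat.choose_pos (Nat.le_add_left b a)).ne'
  rw [← Nat.add_choose_mul_factorial_mul_factorial a b]
  push_cast
  field_simp

namespace Finset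
variable {ι : Type*} [DecidableEq ι]

theorem sum_piAntidiag_prod_choose (s : Finset ι) (p : ι → ℕ) (m : ℕ) :
    ∑ c ∈ s.piAntidiag m, ∏ i ∈ s, (p i).choose (c i) = (∑ i ∈ s, p i).choose m := by
  induction s using Finset.cons_induction generalizing m with
  | empty => rcases m with _ | m <;> simp
  | cons a s ha ih =>
    rw [piAntidiag_cons ha, sum_disjiUnion, sum_cons, Nat.add_choose_eq]
    refine sum_congr rfl fun ab _ => ?_
    rw [sum_map, ← ih, mul_sum]
    refine sum_congr rfl fun c hc => ?_
    have hca : c a = 0 := by_contra fun h => ha ((mem_piAntidiag.1 hc).2 a h)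
    rw [prod_cons]
    congr 1
    · simp [hca]
    · exact prod_congr rfl fun i hi => by simp [ne_of_mem_of_not_mem hi ha]

theorem sum_piAntidiag_prod_inv_factorial (s : Finset ι) (m : ℕ) :
    ∑ c ∈ s.piAntidiag m, ∏ i ∈ s, ((c i)! : ℝ)⁻¹ = (#s : ℝ) ^ m / m ! := by
  have hpow : (#s : ℝ) ^ m = ∑ c ∈ s.piAntidiag m, (Nat.multinomial s c : ℝ) := by
    simpa using sum_pow_eq_sum_piAntidiag s (fun _ => (1 : ℝ)) m
  rw [hpow, sum_div]
  refine sum_congr rfl fun c hc => ?_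
  have hspec := Nat.multinomial_spec s c
  rw [(mem_piAntidiag.1 hc).1] at hspec
  rw [eq_div_iff (by positivity), prod_inv_distrib, ← hspec]
  push_cast
  field_simp

theorem sum_piAntidiag_prod_inv_factorial_add_mul_choose (s : Finset ι) (j : ι → ℕ) (m : ℕ) :
    ∑ c ∈ s.piAntidiag m, ∏ i ∈ s, ((j i + c i)! : ℝ)⁻¹ * (j i + c i).choose (c i)
      = (∏ i ∈ s, ((j i)! : ℝ)⁻¹) * (#s ^ m / m !) := by
  simp_rw [Nat.inv_factorial_add_mul_choose, prod_mul_distrib, ← mul_sum,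
    sum_piAntidiag_prod_inv_factorial]

end Finset

section
variable {Ω ι α : Type*}

lemma pairwise_disjoint_setOf_forall_eq (Y : ι → Ω → α) :
    Pairwise fun q r : ι → α => Disjoint {ω | ∀ i, Y i ω = q i} {ω | ∀ i, Y i ω = r i} :=
  fun _ _ hqr => Set.disjoint_left.2 fun _ hq hr => hqr (funext fun i => (hq i).symm.trans (hr i))

lemma pairwise_disjoint_setOf_forall_eq_neg_natCast (D : ι → Ω → ℤ) :
    Pairwise fun c d : ι → ℕ =>
      Disjoint {ω | ∀ k, D k ω = -(c k : ℤ)} {ω | ∀ k, D k ω = -(d k : ℤ)} :=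
  (pairwise_disjoint_setOf_forall_eq D).comp_of_injective fun c d hcd =>
    funext fun k => by simpa using congrFun hcd k

variable [Fintype ι]

lemma setOf_sum_eq_eq_biUnion [DecidableEq ι] (X : ι → Ω → ℕ) (m : ℕ) :
    {ω | ∑ i, X i ω = m} = ⋃ p ∈ univ.piAntidiag m, {ω | ∀ i, X i ω = p i} := by
  ext ω
  simp only [Set.mem_ofPred_eq, Set.mem_iUnion, mem_piAntidiag, exists_prop]
  constructor
  · intro h
    exact ⟨fun i => X i ω, ⟨h, fun i _ => mem_univ i⟩, fun i => rfl⟩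
  · rintro ⟨p, ⟨rfl, -⟩, hp⟩
    exact sum_congr rfl fun i _ => hp i

variable [MeasurableSpace Ω] {μ : Measure Ω}

lemma measurableSet_setOf_forall_eq [MeasurableSpace α] [MeasurableSingletonClass α]
    {Y : ι → Ω → α} (hY : ∀ i, Measurable (Y i)) (q : ι → α) :
    MeasurableSet {ω | ∀ i, Y i ω = q i} := by
  rw [Set.ofPred_forall]
  exact .iInter fun i => hY i (measurableSet_singleton (q i))

lemma measure_setOf_sum_eq_eq_sum [DecidableEq ι] {X : ι → Ω → ℕ} (hX : ∀ i, Measurable (X i))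
    (m : ℕ) :
    μ {ω | ∑ i, X i ω = m} = ∑ p ∈ univ.piAntidiag m, μ {ω | ∀ i, X i ω = p i} := by
  rw [setOf_sum_eq_eq_biUnion, measure_biUnion_finset
    ((pairwise_disjoint_setOf_forall_eq X).set_pairwise _)
    fun p _ => measurableSet_setOf_forall_eq hX p]

lemma measure_setOf_forall_eq_of_iIndepFun_poisson {X : ι → Ω → ℕ} (hX : ∀ i, Measurable (X i))
    (hind : iIndepFun X μ) (hlaw : ∀ i, μ.map (X i) = poissonMeasure 1) (p : ι → ℕ) :
    μ {ω | ∀ i, X i ω = p i}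
      = ENNReal.ofReal (exp (-1) ^ Fintype.card ι * ∏ i, ((p i)! : ℝ)⁻¹) := by
  rw [Set.ofPred_forall]
  refine (hind.meas_iInter (s := fun i => X i ⁻¹' {p i})
    fun i => ⟨{p i}, measurableSet_singleton _, rfl⟩).trans ?_
  rw [← card_univ, ← prod_const, ← prod_mul_distrib,
    ENNReal.ofReal_prod_of_nonneg fun i _ => by positivity]
  refine prod_congr rfl fun i _ => ?_
  rw [← Measure.map_apply (hX i) (measurableSet_singleton _), hlaw, poissonMeasure_singleton]
  simp [div_eq_mul_inv]

lemma measure_setOf_sum_eq_of_iIndepFun_poisson [DecidableEq ι] {X : ι → Ω → ℕ}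
    (hX : ∀ i, Measurable (X i)) (hind : iIndepFun X μ)
    (hlaw : ∀ i, μ.map (X i) = poissonMeasure 1) (m : ℕ) :
    μ {ω | ∑ i, X i ω = m}
      = ENNReal.ofReal (exp (-1) ^ Fintype.card ι * ((Fintype.card ι : ℝ) ^ m / m !)) := by
  simp_rw [measure_setOf_sum_eq_eq_sum hX,
    measure_setOf_forall_eq_of_iIndepFun_poisson hX hind hlaw]
  rw [← ENNReal.ofReal_sum_of_nonneg fun p _ => by positivity, ← mul_sum,
    sum_piAntidiag_prod_inv_factorial, card_univ]

lemma measure_sdiff_biUnion_eq_zero_of_sum_cond_eq_one [IsFiniteMeasure μ] {κ : Type*}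
    {S : Finset κ} {A : Set Ω} {T : κ → Set Ω} (hA : MeasurableSet A)
    (hT : ∀ c ∈ S, MeasurableSet (T c)) (hdisj : (S : Set κ).PairwiseDisjoint T)
    (hsum : ∑ c ∈ S, μ[T c | A] = 1) :
    μ (A \ ⋃ c ∈ S, T c) = 0 := by
  have hAT : μ (A ∩ ⋃ c ∈ S, T c) = μ A := by
    rw [← cond_mul_eq_inter hA, measure_biUnion_finset hdisj hT, hsum, one_mul]
  have hsplit := measure_inter_add_sdiff (μ := μ) A (S.measurableSet_biUnion hT)
  rw [hAT] at hsplit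
  exact (ENNReal.add_right_inj (measure_ne_top μ A)).1 (hsplit.trans (add_zero _).symm)

section Removal

/-- On each level set `∑ i, X i = m`, given `X = p`, the vector `-D` counts the balls taken from
each box when `s` of the `m` balls, `p i` of them in box `i`, are removed uniformly at random. -/
def IsUniformRemoval (μ : Measure Ω) (X : ι → Ω → ℕ) (D : ι → Ω → ℤ) (m s : ℕ) : Prop :=
  ∀ p : ι → ℕ, ∑ i, p i = m → ∀ c : ι → ℕ,
    μ[{ω | ∀ k, D k ω = -(c k : ℤ)} | {ω | ∀ i, X i ω = p i}]
      = if ∑ i, c i = s then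
          (∏ i, ((p i).choose (c i) : ℝ≥0∞)) / ((∑ i, p i).choose s : ℝ≥0∞)
        else 0

variable [IsFiniteMeasure μ] [DecidableEq ι] {X : ι → Ω → ℕ} {D : ι → Ω → ℤ}

lemma IsUniformRemoval.measure_setOf_forall_eq_sdiff_eq_zero {m s : ℕ}
    (hlaw : IsUniformRemoval μ X D m s) (hX : ∀ i, Measurable (X i)) (hD : ∀ k, Measurable (D k))
    (hs : s ≤ m) {p : ι → ℕ} (hp : ∑ i, p i = m) :
    μ ({ω | ∀ i, X i ω = p i} \ ⋃ c ∈ univ.piAntidiag s, {ω | ∀ k, D k ω = -(c k : ℤ)}) = 0 := by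
  refine measure_sdiff_biUnion_eq_zero_of_sum_cond_eq_one (measurableSet_setOf_forall_eq hX p)
    (fun c _ => measurableSet_setOf_forall_eq hD _)
    ((pairwise_disjoint_setOf_forall_eq_neg_natCast D).set_pairwise _) ?_
  have hchoose : ((∑ i, p i).choose s : ℝ≥0∞) ≠ 0 := by
    exact_mod_cast (Nat.choose_pos (hp ▸ hs)).ne'
  have hvandermonde : ∑ c ∈ univ.piAntidiag s, ∏ i, ((p i).choose (c i) : ℝ≥0∞)
      = ((∑ i, p i).choose s : ℝ≥0∞) := by
    exact_mod_cast sum_piAntidiag_prod_choose univ p s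
  rw [sum_congr rfl fun c hc => by rw [hlaw p hp c, if_pos (mem_piAntidiag.1 hc).1]]
  simp_rw [div_eq_mul_inv]
  rw [← sum_mul, hvandermonde, ENNReal.mul_inv_cancel hchoose (ENNReal.natCast_ne_top _)]

lemma IsUniformRemoval.measure_setOf_sum_eq_inter_add_eq {m s : ℕ}
    (hlaw : IsUniformRemoval μ X D (m + s) s) (hX : ∀ i, Measurable (X i))
    (hD : ∀ k, Measurable (D k)) {j : ι → ℕ} (hj : ∑ i, j i = m) :
    μ ({ω | ∑ i, X i ω = m + s} ∩ {ω | ∀ i, (X i ω : ℤ) + D i ω = j i})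
      = ∑ c ∈ univ.piAntidiag s, μ {ω | ∀ i, X i ω = j i + c i} *
          ((∏ i, ((j i + c i).choose (c i) : ℝ≥0∞)) / ((m + s).choose s : ℝ≥0∞)) := by
  set G := ⋃ c ∈ univ.piAntidiag s, {ω | ∀ k, D k ω = -(c k : ℤ)}
  have hnull : μ ({ω | ∑ i, X i ω = m + s} \ G) = 0 := by
    rw [setOf_sum_eq_eq_biUnion]
    simp_rw [Set.iUnion_sdiff]
    refine (measure_biUnion_null_iff (univ.piAntidiag (m + s)).countable_toSet).2 fun p hp => ?_
    have hp : ∑ i, p i = m + s := (mem_piAntidiag.1 hp).1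
    exact hlaw.measure_setOf_forall_eq_sdiff_eq_zero hX hD (Nat.le_add_left s m) hp
  have hsum : ∀ c ∈ univ.piAntidiag s, ∑ i, (j i + c i) = m + s := fun c hc => by
    rw [sum_add_distrib, hj, (mem_piAntidiag.1 hc).1]
  have hcorrected : {ω | ∑ i, X i ω = m + s} ∩ {ω | ∀ i, (X i ω : ℤ) + D i ω = j i} ∩ G
      = ⋃ c ∈ univ.piAntidiag s,
          {ω | ∀ i, X i ω = j i + c i} ∩ {ω | ∀ k, D k ω = -(c k : ℤ)} := by
    ext ω
    simp only [G, Set.mem_inter_iff, Set.mem_ofPred_eq, Set.mem_iUnion, exists_prop]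
    constructor
    · rintro ⟨⟨-, hE⟩, c, hc, hDc⟩
      exact ⟨c, hc, fun i => by have := hE i; have := hDc i; omega, hDc⟩
    · rintro ⟨c, hc, hXc, hDc⟩
      refine ⟨⟨?_, fun i => by rw [hXc i, hDc i]; push_cast; ring⟩, c, hc, hDc⟩
      rw [← hsum c hc]
      exact sum_congr rfl fun i _ => hXc i
  calc μ ({ω | ∑ i, X i ω = m + s} ∩ {ω | ∀ i, (X i ω : ℤ) + D i ω = j i})
      = μ ({ω | ∑ i, X i ω = m + s} ∩ {ω | ∀ i, (X i ω : ℤ) + D i ω = j i} ∩ G) :=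
        (measure_inter_conull' (measure_mono_null
          (Set.sdiff_subset_sdiff_left Set.inter_subset_left) hnull)).symm
    _ = ∑ c ∈ univ.piAntidiag s,
          μ ({ω | ∀ i, X i ω = j i + c i} ∩ {ω | ∀ k, D k ω = -(c k : ℤ)}) := by
        have hdisj : ((univ.piAntidiag s : Finset (ι → ℕ)) : Set (ι → ℕ)).PairwiseDisjoint fun c =>
            {ω | ∀ i, X i ω = j i + c i} ∩ {ω | ∀ k, D k ω = -(c k : ℤ)} :=
          Set.PairwiseDisjoint.mono
            ((pairwise_disjoint_setOf_forall_eq_neg_natCast D).set_pairwise _)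
            fun _ => Set.inter_subset_right
        rw [hcorrected, measure_biUnion_finset hdisj fun c _ =>
          (measurableSet_setOf_forall_eq hX _).inter (measurableSet_setOf_forall_eq hD _)]
    _ = _ := sum_congr rfl fun c hc => by
        rw [← cond_mul_eq_inter (measurableSet_setOf_forall_eq hX _), hlaw _ (hsum c hc) c,
          if_pos (mem_piAntidiag.1 hc).1, hsum c hc, mul_comm]

end Removal

lemma measure_setOf_sum_eq_inter_add_eq_of_iIndepFun_poisson [IsFiniteMeasure μ] [DecidableEq ι]
    {X : ι → Ω → ℕ} {D : ι → Ω → ℤ} (hX : ∀ i, Measurable (X i)) (hind : iIndepFun X μ)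
    (hXlaw : ∀ i, μ.map (X i) = poissonMeasure 1) (hD : ∀ k, Measurable (D k)) {m s : ℕ}
    (hDlaw : IsUniformRemoval μ X D (m + s) s)
    {j : ι → ℕ} (hj : ∑ i, j i = m) :
    μ ({ω | ∑ i, X i ω = m + s} ∩ {ω | ∀ i, (X i ω : ℤ) + D i ω = j i})
      = ENNReal.ofReal (exp (-1) ^ Fintype.card ι *
          ((∏ i, ((j i)! : ℝ)⁻¹) * ((Fintype.card ι : ℝ) ^ s / s !)) / (m + s).choose s) := by
  have hchoose : (0 : ℝ) < (m + s).choose s := Nat.cast_pos.2 (Nat.choose_pos (Nat.le_add_left s m))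
  rw [hDlaw.measure_setOf_sum_eq_inter_add_eq hX hD hj, ← card_univ,
    ← sum_piAntidiag_prod_inv_factorial_add_mul_choose, mul_sum, sum_div,
    ENNReal.ofReal_sum_of_nonneg fun c _ => by positivity]
  refine sum_congr rfl fun c _ => ?_
  have hratio : (∏ i, ((j i + c i).choose (c i) : ℝ≥0∞)) / ((m + s).choose s : ℝ≥0∞)
      = ENNReal.ofReal ((∏ i, ((j i + c i).choose (c i) : ℝ)) / (m + s).choose s) := by
    rw [ENNReal.ofReal_div_of_pos hchoose, ENNReal.ofReal_prod_of_nonneg fun i _ => by positivity]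
    simp
  rw [measure_setOf_forall_eq_of_iIndepFun_poisson hX hind hXlaw, hratio,
    ← ENNReal.ofReal_mul (by positivity), prod_mul_distrib, card_univ]
  congr 1
  ring

end

theorem corrected_poisson_is_conditioned_poisson_general
    {Ω : Type*} [MeasureSpace Ω] [IsProbabilityMeasure (ℙ : Measure Ω)]
    (n s : ℕ) (hn : 1 ≤ n)
    (P : Fin n → Ω → ℕ) (hmeas : ∀ i, Measurable (P i))
    (hindep : iIndepFun P ℙ)
    (hpois : ∀ i, Measure.map (P i) ℙ = poissonMeasure 1)
    (D : Fin n → Ω → ℤ) (hDmeas : ∀ k, Measurable (D k))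
    (hD : ∀ p : Fin n → ℕ, ∑ i, p i = n + s → ∀ c : Fin n → ℕ,
      ℙ[{ω | ∀ k, D k ω = -(c k : ℤ)} | {ω | ∀ i, P i ω = p i}]
        = if ∑ i, c i = s then
            (∏ i, ((p i).choose (c i) : ℝ≥0∞)) / ((∑ i, p i).choose s : ℝ≥0∞)
          else 0)
    (j : Fin n → ℕ) (hj : ∑ i, j i = n) :
    ℙ[{ω | ∀ i, (P i ω : ℤ) + D i ω = (j i : ℤ)} | {ω | ∑ k, P k ω = n + s}]
      = ℙ[{ω | ∀ i, P i ω = j i} | {ω | ∑ k, P k ω = n}] := by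
  have hlevel (m : ℕ) : MeasurableSet {ω | ∑ k, P k ω = m} :=
    measurable_sum _ (fun i _ => hmeas i) (measurableSet_singleton m)
  have hj_level : {ω | ∑ k, P k ω = n} ∩ {ω | ∀ i, P i ω = j i} = {ω | ∀ i, P i ω = j i} :=
    Set.inter_eq_right.2 fun ω hω => (sum_congr rfl fun i _ => hω i).trans hj
  rw [cond_apply (hlevel _), cond_apply (hlevel _), hj_level,
    measure_setOf_sum_eq_inter_add_eq_of_iIndepFun_poisson hmeas hindep hpois hDmeas hD hj,
    measure_setOf_forall_eq_of_iIndepFun_poisson hmeas hindep hpois,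
    measure_setOf_sum_eq_of_iIndepFun_poisson hmeas hindep hpois,
    measure_setOf_sum_eq_of_iIndepFun_poisson hmeas hindep hpois, Fintype.card_fin]
  have hn_pos : (0 : ℝ) < n := by exact_mod_cast hn
  rw [← ENNReal.ofReal_inv_of_pos (by positivity), ← ENNReal.ofReal_inv_of_pos (by positivity),
    ← ENNReal.ofReal_mul (by positivity), ← ENNReal.ofReal_mul (by positivity),
    Nat.cast_choose ℝ (Nat.le_add_left s n), Nat.add_sub_cancel]
  congr 1
  field_simp
  ring

/-- **Correction of a Poisson random walk, case `S_n = s > 0`.**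
Let `P 0, …, P (n-1)` be i.i.d. Poisson(1) random variables and let `(ΔC k)` be a random
vector whose conditional law given `(P i) = (p i)` with `∑ p i = n + s` is
`P(∀ k, ΔC k = −c k | ∀ i, P i = p i) = (∏ i, C(p i, c i) 1_{c i ≤ p i}) / C(∑ p i, s)`
for nonnegative integers `c i` summing to `s` (and `0` otherwise; note that
`Nat.choose (p i) (c i) = 0` when `c i > p i`).  Then for all nonnegative integers `j i`
with `∑ j i = n`,
`P(∀ i, P i + ΔC i = j i | ∑ k, P k = n + s) = P(∀ i, P i = j i | ∑ k, P k = n)`,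
i.e. conditionally on `S_n = s` the corrected vector is distributed as `(P i)` conditioned
by `S_n = 0`. -/
theorem corrected_poisson_is_conditioned_poisson
    {Ω : Type*} [MeasureSpace Ω] [IsProbabilityMeasure (ℙ : Measure Ω)]
    (n s : ℕ) (hn : 1 ≤ n) (hs : 0 < s)
    (P : Fin n → Ω → ℕ) (hmeas : ∀ i, Measurable (P i))
    (hindep : iIndepFun P ℙ)
    (hpois : ∀ i, Measure.map (P i) ℙ = poissonMeasure 1)
    (D : Fin n → Ω → ℤ) (hDmeas : ∀ k, Measurable (D k))
    (hD : ∀ p : Fin n → ℕ, ∑ i, p i = n + s → ∀ c : Fin n → ℕ,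
      ℙ[{ω | ∀ k, D k ω = -(c k : ℤ)} | {ω | ∀ i, P i ω = p i}]
        = if ∑ i, c i = s then
            (∏ i, ((p i).choose (c i) : ℝ≥0∞)) / ((∑ i, p i).choose s : ℝ≥0∞)
          else 0)
    (j : Fin n → ℕ) (hj : ∑ i, j i = n) :
    ℙ[{ω | ∀ i, (P i ω : ℤ) + D i ω = (j i : ℤ)} | {ω | ∑ k, P k ω = n + s}]
      = ℙ[{ω | ∀ i, P i ω = j i} | {ω | ∑ k, P k ω = n}] :=
  corrected_poisson_is_conditioned_poisson_general n s hn P hmeas hindep hpois D hDmeas hD j hj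
end

section
/- Let (X_n) be a sequence of random elements of C([0,1], ℝ) such that almost surely each X_n is a monotone (nondecreasing) function on [0,1]. Suppose there is a random element X of C([0,1], ℝ) such that the finite-dimensional distributions of X_n converge to those of X, i.e. for every k and every 0 ≤ t_1 ≤ … ≤ t_k ≤ 1, the random vector (X_n(t_1),…,X_n(t_k)) converges in distribution in ℝ^k to (X(t_1),…,X(t_k)). Then the family of laws of (X_n) is tight in C([0,1], ℝ), and consequently X_n converges in distribution to X in C([0,1], ℝ) with the uniform topology. -/
open MeasureTheory ProbabilityTheory Filter Topology
open scoped ENNReal NNReal BoundedContinuousFunction unitInterval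

/-- A family of measures `μ n` is tight when for every `ε > 0` there is a compact set `K`
with `μ n K ≥ 1 − ε` for every `n`. -/
def IsTightFamily {E : Type*} [TopologicalSpace E] [MeasurableSpace E]
    (μ : ℕ → Measure E) : Prop :=
  ∀ ε : ℝ≥0∞, 0 < ε → ∃ K : Set E, IsCompact K ∧ ∀ n, 1 - ε ≤ μ n K

/-!
A nondecreasing `f` satisfies `‖f‖ ≤ max |f 0| |f 1|` and
`ω_{1/m}(f) ≤ 2 max_k |f (k/m) - f ((k-1)/m)|`. Hence the events `‖X n‖ > M` and
`ω_{1/m}(X n) > c` lie in closed events on finitely many coordinates, whose probabilities are,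
by the portmanteau theorem, eventually controlled by the corresponding ones for `Y`; the finitely
many remaining `n` are tight individually, and Arzelà–Ascoli gives tightness. For the
convergence, a bounded continuous `g` is approximated, uniformly on compact sets, by `g` composed
with piecewise-linear interpolation on the grid `k/m`, which depends on finitely many coordinates.
-/

open Set Metric

noncomputable section

section Modulus

variable {α β : Type*} [PseudoMetricSpace α] [PseudoMetricSpace β]

/-- The continuous maps with modulus of continuity `ω_δ(f) ≤ c`. -/
def modulusLE (δ c : ℝ) : Set C(α, β) :=
  {f | ∀ x y, dist x y ≤ δ → dist (f x) (f y) ≤ c}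

lemma isClosed_modulusLE (δ c : ℝ) : IsClosed (modulusLE δ c : Set C(α, β)) := by
  simp only [modulusLE, ofPred_forall]
  exact isClosed_iInter fun x => isClosed_iInter fun y => isClosed_iInter fun _ =>
    isClosed_le ((continuous_eval_const x).dist (continuous_eval_const y)) continuous_const

lemma modulusLE_mono {δ δ' c c' : ℝ} (hδ : δ' ≤ δ) (hc : c ≤ c') :
    (modulusLE δ c : Set C(α, β)) ⊆ modulusLE δ' c' :=
  fun _ hf x y hxy => (hf x y (hxy.trans hδ)).trans hc

lemma monotone_modulusLE_nat (c : ℝ) :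
    Monotone fun m : ℕ => (modulusLE ((m : ℝ) + 1)⁻¹ c : Set C(α, β)) := fun a b h =>
  modulusLE_mono (inv_anti₀ (by positivity) (by exact_mod_cast Nat.succ_le_succ h)) le_rfl

variable [CompactSpace α]

lemma IsCompact.exists_subset_modulusLE {K : Set C(α, β)} (hK : IsCompact K) {c : ℝ}
    (hc : 0 < c) : ∃ δ > 0, K ⊆ modulusLE δ c := by
  have huc : UniformContinuousOn (fun p : C(α, β) × α => p.1 p.2) (K ×ˢ univ) :=
    (hK.prod isCompact_univ).uniformContinuousOn_of_continuous continuous_eval.continuousOn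
  obtain ⟨δ, hδ, h⟩ := Metric.uniformContinuousOn_iff.1 huc c hc
  refine ⟨δ / 2, half_pos hδ, fun f hf x y hxy =>
    (h (f, x) ⟨hf, trivial⟩ (f, y) ⟨hf, trivial⟩ ?_).le⟩
  rw [Prod.dist_eq, dist_self, max_eq_right dist_nonneg]
  linarith

lemma IsCompact.exists_nat_subset_modulusLE {K : Set C(α, β)} (hK : IsCompact K) {c : ℝ}
    (hc : 0 < c) : ∃ m : ℕ, K ⊆ modulusLE ((m : ℝ) + 1)⁻¹ c := by
  obtain ⟨δ, hδ, hKδ⟩ := hK.exists_subset_modulusLE hc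
  obtain ⟨m, hm⟩ := exists_nat_one_div_lt hδ
  exact ⟨m, hKδ.trans (modulusLE_mono (by simpa using hm.le) le_rfl)⟩

/-- **Arzelà–Ascoli**. -/
theorem isCompact_of_forall_exists_modulusLE {s : Set β} (hs : IsCompact s)
    {S : Set C(α, β)} (hS : IsClosed S) (hSs : ∀ f ∈ S, ∀ x, f x ∈ s)
    (hmod : ∀ c > 0, ∃ δ > 0, S ⊆ modulusLE δ c) : IsCompact S := by
  let e := ContinuousMap.isometryEquivBoundedOfCompact α β
  have hA : IsCompact (e '' S) := by
    refine BoundedContinuousFunction.arzela_ascoli₂ s hs _ (e.toHomeomorph.isClosedMap _ hS)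
      (by rintro _ x ⟨f, hf, rfl⟩; exact hSs f hf x) fun x => ?_
    refine Metric.equicontinuousAt_iff.2 fun c hc => ?_
    obtain ⟨δ, hδ, hSδ⟩ := hmod (c / 2) (half_pos hc)
    refine ⟨δ, hδ, fun y hy ⟨_, f, hf, rfl⟩ => ?_⟩
    exact (hSδ hf x y (by rw [dist_comm]; exact hy.le)).trans_lt (half_lt_self hc)
  exact e.toHomeomorph.isCompact_image.1 hA

end Modulus

section Tightness

variable {E : Type*} [TopologicalSpace E] [MeasurableSpace E]

lemma MeasureTheory.IsTightMeasureSet.exists_measure_compl_lt {ι : Type*} {μ : Measure E}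
    (hμ : IsTightMeasureSet {μ}) {S : ι → Set E} (hS : ∀ K, IsCompact K → ∃ i, K ⊆ S i)
    {e : ℝ≥0∞} (he : 0 < e) : ∃ i, μ (S i)ᶜ < e := by
  obtain ⟨e', he', he'e⟩ := exists_between he
  obtain ⟨K, hK, hμK⟩ := isTightMeasureSet_iff_exists_isCompact_measure_compl_le.1 hμ e' he'
  obtain ⟨i, hi⟩ := hS K hK
  exact ⟨i, ((measure_mono (compl_subset_compl.2 hi)).trans (hμK μ rfl)).trans_lt he'e⟩

/-- A bound valid for all large `n` extends to all `n`, since each single measure is tight. -/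
lemma exists_forall_measure_compl_le {ι : Type*} [Preorder ι] [IsDirectedOrder ι] [Nonempty ι]
    {μ : ℕ → Measure E} (hμ : ∀ n, IsTightMeasureSet {μ n}) {S : ι → Set E} (hS_mono : Monotone S)
    (hS : ∀ K, IsCompact K → ∃ i, K ⊆ S i) {e : ℝ≥0∞} (he : 0 < e)
    (hev : ∃ i, ∀ᶠ n in atTop, μ n (S i)ᶜ ≤ e) : ∃ i, ∀ n, μ n (S i)ᶜ ≤ e := by
  classical
  obtain ⟨i₀, hi₀⟩ := hev
  obtain ⟨N, hN⟩ := eventually_atTop.1 hi₀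
  choose i hi using fun n => (hμ n).exists_measure_compl_lt hS he
  obtain ⟨j, hj⟩ := Finset.exists_le (insert i₀ ((Finset.range N).image i))
  have hle : ∀ {n k}, k ≤ j → μ n (S j)ᶜ ≤ μ n (S k)ᶜ :=
    fun h => measure_mono (compl_subset_compl.2 (hS_mono h))
  refine ⟨j, fun n => ?_⟩
  rcases lt_or_ge n N with hn | hn
  · exact (hle (hj _ (Finset.mem_insert_of_mem (Finset.mem_image_of_mem i
      (Finset.mem_range.2 hn))))).trans (hi n).le
  · exact (hle (hj _ (Finset.mem_insert_self _ _))).trans (hN n hn)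

theorem isTightMeasureSet_of_forall_modulusLE {α β : Type*} [PseudoMetricSpace α]
    [CompactSpace α] [NormedAddCommGroup β] [ProperSpace β] [MeasurableSpace C(α, β)]
    {S : Set (Measure C(α, β))}
    (hnorm : ∀ e > 0, ∃ M, ∀ μ ∈ S, μ (closedBall 0 M)ᶜ ≤ e)
    (hmod : ∀ c > 0, ∀ e > 0, ∃ δ > 0, ∀ μ ∈ S, μ (modulusLE δ c)ᶜ ≤ e) :
    IsTightMeasureSet S := by
  rw [isTightMeasureSet_iff_exists_isCompact_measure_compl_le]
  intro ε hε
  obtain ⟨M, hM⟩ := hnorm (ε / 2) (ENNReal.half_pos hε.ne')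
  obtain ⟨e, he, hsum⟩ := ENNReal.exists_pos_sum_of_countable (ENNReal.half_pos hε.ne').ne' ℕ
  choose δ hδ hδμ using fun j : ℕ =>
    hmod ((j : ℝ) + 1)⁻¹ (by positivity) (e j) (ENNReal.coe_pos.2 (he j))
  refine ⟨closedBall 0 M ∩ ⋂ j, modulusLE (δ j) ((j : ℝ) + 1)⁻¹, ?_, fun μ hμ => ?_⟩
  · refine isCompact_of_forall_exists_modulusLE (isCompact_closedBall (0 : β) M)
      (isClosed_closedBall.inter (isClosed_iInter fun j => isClosed_modulusLE _ _))
      (fun f hf x => ?_) fun c hc => ?_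
    · simpa using (f.norm_coe_le_norm x).trans (mem_closedBall_zero_iff.1 hf.1)
    · obtain ⟨j, hj⟩ := exists_nat_one_div_lt hc
      exact ⟨δ j, hδ j, fun f hf =>
        modulusLE_mono le_rfl (by simpa using hj.le) (mem_iInter.1 hf.2 j)⟩
  · calc μ (closedBall 0 M ∩ ⋂ j, modulusLE (δ j) ((j : ℝ) + 1)⁻¹)ᶜ
        ≤ μ (closedBall 0 M)ᶜ + ∑' j, μ (modulusLE (δ j) ((j : ℝ) + 1)⁻¹)ᶜ := by
          rw [compl_inter, compl_iInter]
          exact (measure_union_le _ _).trans (by gcongr; exact measure_iUnion_le _)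
      _ ≤ ε / 2 + ε / 2 :=
          add_le_add (hM μ hμ) ((ENNReal.tsum_le_tsum fun j => hδμ j μ hμ).trans hsum.le)
      _ = ε := ENNReal.add_halves ε

lemma MeasureTheory.IsTightMeasureSet.isTightFamily [T2Space E] [OpensMeasurableSpace E]
    {μ : ℕ → Measure E} [∀ n, IsProbabilityMeasure (μ n)] (h : IsTightMeasureSet (range μ)) :
    IsTightFamily μ := by
  intro ε hε
  obtain ⟨K, hK, hμK⟩ := isTightMeasureSet_iff_exists_isCompact_measure_compl_le.1 h ε hε
  refine ⟨K, hK, fun n => tsub_le_iff_tsub_le.1 ?_⟩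
  rw [← prob_compl_eq_one_sub hK.isClosed.measurableSet]
  exact hμK _ (mem_range_self n)

end Tightness

section WeakConvergence

variable {E : Type*} [TopologicalSpace E] [MeasurableSpace E] [OpensMeasurableSpace E]

lemma eventually_measure_lt_of_tendsto_integral [HasOuterApproxClosed E] {μ : ℕ → Measure E}
    [∀ n, IsProbabilityMeasure (μ n)] {ν : Measure E} [IsProbabilityMeasure ν]
    (h : ∀ f : E →ᵇ ℝ, Tendsto (fun n => ∫ x, f x ∂μ n) atTop (𝓝 (∫ x, f x ∂ν)))
    {F : Set E} (hF : IsClosed F) {e : ℝ≥0∞} (he : ν F < e) : ∀ᶠ n in atTop, μ n F < e := by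
  have hlim : Tendsto (β := ProbabilityMeasure E) (fun n => ⟨μ n, inferInstance⟩) atTop
      (𝓝 ⟨ν, inferInstance⟩) :=
    ProbabilityMeasure.tendsto_iff_forall_integral_tendsto.2 h
  exact eventually_lt_of_limsup_lt
    ((ProbabilityMeasure.limsup_measure_closed_le_of_tendsto hlim hF).trans_lt he)

lemma dist_integral_le_of_forall_mem (μ : Measure E) [IsProbabilityMeasure μ] {K : Set E}
    (hK : MeasurableSet K) {φ ψ : E →ᵇ ℝ} {a : ℝ} (ha : 0 ≤ a)
    (hKa : ∀ x ∈ K, dist (φ x) (ψ x) ≤ a) :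
    dist (∫ x, φ x ∂μ) (∫ x, ψ x ∂μ) ≤ a + dist φ ψ * μ.real Kᶜ := by
  have hind : Integrable (Kᶜ.indicator fun _ => dist φ ψ) μ :=
    (integrable_const _).indicator hK.compl
  rw [dist_eq_norm, ← integral_sub (φ.integrable μ) (ψ.integrable μ)]
  calc ‖∫ x, φ x - ψ x ∂μ‖ ≤ ∫ x, (a + Kᶜ.indicator (fun _ => dist φ ψ) x) ∂μ := by
        refine norm_integral_le_of_norm_le ((integrable_const a).add hind)
          (Eventually.of_forall fun x => ?_)
        rw [← dist_eq_norm]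
        by_cases hx : x ∈ K
        · simpa [hx] using hKa x hx
        · simpa [hx] using (φ.dist_coe_le_dist x).trans (le_add_of_nonneg_left ha)
    _ = a + dist φ ψ * μ.real Kᶜ := by
        rw [integral_add (integrable_const a) hind, integral_indicator_const _ hK.compl]
        simp [mul_comm]

variable [T2Space E]

theorem tendstoUniformly_integral_of_isTightMeasureSet {ι : Type*} {μ : ι → Measure E}
    [∀ i, IsProbabilityMeasure (μ i)] (hμ : IsTightMeasureSet (range μ)) {g : E →ᵇ ℝ}
    {h : ℕ → E →ᵇ ℝ} (hbdd : ∀ m, ‖h m‖ ≤ ‖g‖)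
    (hconv : ∀ K, IsCompact K → TendstoUniformlyOn (fun m => ⇑(h m)) g atTop K) :
    TendstoUniformly (fun m i => ∫ x, h m x ∂μ i) (fun i => ∫ x, g x ∂μ i) atTop := by
  rw [Metric.tendstoUniformly_iff]
  intro ε hε
  set C := 2 * ‖g‖ + 1
  have hC : 0 < C := by positivity
  obtain ⟨K, hK, hμK⟩ := isTightMeasureSet_iff_exists_isCompact_measure_compl_le.1 hμ
    (ENNReal.ofReal (ε / (3 * C))) (ENNReal.ofReal_pos.2 (by positivity))
  filter_upwards [Metric.tendstoUniformlyOn_iff.1 (hconv K hK) (ε / 3) (by positivity)]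
    with m hm i
  have hdist : dist g (h m) ≤ C := (dist_le_norm_add_norm _ _).trans (by linarith [hbdd m])
  have hmass : (μ i).real Kᶜ ≤ ε / (3 * C) :=
    ENNReal.toReal_le_of_le_ofReal (by positivity) (hμK _ (mem_range_self i))
  calc dist (∫ x, g x ∂μ i) (∫ x, h m x ∂μ i)
      ≤ ε / 3 + dist g (h m) * (μ i).real Kᶜ :=
        dist_integral_le_of_forall_mem _ hK.isClosed.measurableSet (by positivity)
          fun x hx => (hm x hx).le
    _ ≤ ε / 3 + C * (ε / (3 * C)) := by gcongr
    _ < ε := by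
        rw [mul_div_left_comm, div_mul_cancel_right₀ hC.ne']
        linarith

theorem tendsto_integral_of_isTightMeasureSet {μ : ℕ → Measure E}
    [∀ n, IsProbabilityMeasure (μ n)] {ν : Measure E} [IsProbabilityMeasure ν]
    (hμ : IsTightMeasureSet (range μ)) (hν : IsTightMeasureSet {ν}) {g : E →ᵇ ℝ}
    {h : ℕ → E →ᵇ ℝ} (hbdd : ∀ m, ‖h m‖ ≤ ‖g‖)
    (hconv : ∀ K, IsCompact K → TendstoUniformlyOn (fun m => ⇑(h m)) g atTop K)
    (hlim : ∀ m, Tendsto (fun n => ∫ x, h m x ∂μ n) atTop (𝓝 (∫ x, h m x ∂ν))) :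
    Tendsto (fun n => ∫ x, g x ∂μ n) atTop (𝓝 (∫ x, g x ∂ν)) :=
  (tendstoUniformly_integral_of_isTightMeasureSet hμ hbdd hconv).tendsto_of_eventually_tendsto
    (Eventually.of_forall hlim)
    ((tendstoUniformly_integral_of_isTightMeasureSet (μ := fun _ : Unit => ν)
      (by rwa [range_const]) hbdd hconv).tendsto_at ())

end WeakConvergence

lemma Continuous.comp_tendstoUniformlyOn_of_isCompact {α β γ ι : Type*} [UniformSpace α]
    [UniformSpace β] {g : α → β} (hg : Continuous g) {F : ι → γ → α} {f : γ → α} {p : Filter ι}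
    {s : Set γ} (hs : IsCompact (f '' s)) (h : TendstoUniformlyOn F f p s) :
    TendstoUniformlyOn (fun i => g ∘ F i) (g ∘ f) p s := fun u hu => by
  filter_upwards [h _ (hs.uniformContinuousAt_of_continuousAt g (fun a _ => hg.continuousAt) hu)]
    with i hi x hx using hi x hx (mem_image_of_mem f hx)

section Grid

/-- `k/m`, clamped to `1` for `k > m`. -/
def gridPt (m k : ℕ) : I := projIcc 0 1 zero_le_one (k / m)

def grid (m : ℕ) (k : Fin (m + 1)) : I := gridPt m k

lemma monotone_gridPt (m : ℕ) : Monotone (gridPt m) :=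
  (monotone_projIcc _).comp fun _ _ h =>
    div_le_div_of_nonneg_right (Nat.cast_le.2 h) (Nat.cast_nonneg m)

lemma monotone_grid (m : ℕ) : Monotone (grid m) :=
  fun _ _ h => monotone_gridPt m (Fin.le_def.1 h)

lemma coe_gridPt {m k : ℕ} (hk : k ≤ m) : (gridPt m k : ℝ) = k / m := by
  rw [gridPt, projIcc_of_mem _ ⟨by positivity, div_le_one_of_le₀ (by exact_mod_cast hk)
    (Nat.cast_nonneg m)⟩]

lemma gridPt_succ_of_le {m k : ℕ} (hm : 0 < m) (hk : m ≤ k) : gridPt m (k + 1) = gridPt m k := by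
  have hm' : (0 : ℝ) < m := Nat.cast_pos.2 hm
  rw [gridPt, gridPt,
    projIcc_of_right_le _ ((one_le_div hm').2 (by exact_mod_cast hk.trans k.le_succ)),
    projIcc_of_right_le _ ((one_le_div hm').2 (by exact_mod_cast hk))]

lemma gridPt_le {m k : ℕ} {x : I} (h : (k : ℝ) / m ≤ x) : gridPt m k ≤ x :=
  (monotone_projIcc zero_le_one h).trans_eq (projIcc_val zero_le_one x)

lemma le_gridPt {m k : ℕ} {x : I} (h : (x : ℝ) ≤ k / m) : x ≤ gridPt m k :=
  (projIcc_val zero_le_one x).symm.trans_le (monotone_projIcc zero_le_one h)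

lemma dist_gridPt_succ_le (m k : ℕ) : dist (gridPt m (k + 1)) (gridPt m k) ≤ (m : ℝ)⁻¹ := by
  rw [Subtype.dist_eq, Real.dist_eq]
  refine (abs_projIcc_sub_projIcc zero_le_one).trans_eq ?_
  rw [Nat.cast_succ, add_div, add_sub_cancel_left, abs_of_nonneg (by positivity), one_div]

end Grid

theorem Monotone.mem_modulusLE_of_gridPt {f : C(I, ℝ)} (hf : Monotone f) {m : ℕ} (hm : 0 < m)
    {a : ℝ} (ha : ∀ k < m, f (gridPt m (k + 1)) - f (gridPt m k) ≤ a) :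
    f ∈ modulusLE (m : ℝ)⁻¹ (2 * a) := by
  have hm' : (0 : ℝ) < m := Nat.cast_pos.2 hm
  have ha' : ∀ k, f (gridPt m (k + 1)) - f (gridPt m k) ≤ a := by
    have ha0 : 0 ≤ a := (sub_nonneg.2 (hf (monotone_gridPt m (Nat.zero_le 1)))).trans (ha 0 hm)
    intro k
    rcases lt_or_ge k m with hk | hk
    · exact ha k hk
    · rwa [gridPt_succ_of_le hm hk, sub_self]
  -- `⌊m x⌋ / m ≤ x` and `y ≤ (⌊m x⌋ + 2) / m`: two grid steps
  have key : ∀ x y : I, (y : ℝ) - x ≤ (m : ℝ)⁻¹ → f y - f x ≤ 2 * a := by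
    intro x y hxy
    set j := ⌊(x : ℝ) * m⌋₊
    have hjx : gridPt m j ≤ x :=
      gridPt_le ((div_le_iff₀ hm').2 (Nat.floor_le (mul_nonneg x.2.1 hm'.le)))
    have hyj : y ≤ gridPt m (j + 2) := by
      refine le_gridPt ((le_div_iff₀ hm').2 ?_)
      have h1 := Nat.lt_floor_add_one ((x : ℝ) * m)
      have h2 : ((y : ℝ) - x) * m ≤ 1 := by
        simpa [hm'.ne'] using mul_le_mul_of_nonneg_right hxy hm'.le
      push_cast
      linarith
    linarith [hf hjx, hf hyj, ha' j, ha' (j + 1)]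
  intro x y hxy
  rw [Subtype.dist_eq, Real.dist_eq] at hxy
  rw [Real.dist_eq]
  rcases le_total x y with h | h
  · rw [abs_sub_comm, abs_of_nonneg (sub_nonneg.2 (hf h))]
    exact key x y (by linarith [abs_le.1 hxy])
  · rw [abs_of_nonneg (sub_nonneg.2 (hf h))]
    exact key y x (by linarith [abs_le.1 hxy])

section Interpolation

lemma sum_range_max_zero_one_sub_abs {m : ℕ} {s : ℝ} (h0 : 0 ≤ s) (hs : s ≤ m) :
    ∑ k ∈ Finset.range (m + 1), max 0 (1 - |s - k|) = 1 := by
  set j := ⌊s⌋₊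
  have hj : (j : ℝ) ≤ s := Nat.floor_le h0
  have hj' : s < j + 1 := Nat.lt_floor_add_one s
  have hjm : j ≤ m := Nat.floor_le_of_le hs
  have hlast : max 0 (1 - |s - ((m + 1 : ℕ) : ℝ)|) = 0 :=
    max_eq_left (by rw [abs_of_neg (by push_cast; linarith)]; push_cast; linarith)
  have hzero : ∀ k : ℕ, k ≠ j → k ≠ j + 1 → max 0 (1 - |s - k|) = 0 := by
    intro k hkj hkj1
    refine max_eq_left (sub_nonpos.2 ?_)
    rcases Nat.lt_or_gt_of_ne hkj with hk | hk
    · have : (k : ℝ) + 1 ≤ j := by exact_mod_cast hk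
      rw [abs_of_nonneg (by linarith)]
      linarith
    · have : (j : ℝ) + 2 ≤ k := by exact_mod_cast (by omega : j + 2 ≤ k)
      rw [abs_of_neg (by linarith)]
      linarith
  have hext := Finset.sum_range_succ (fun k : ℕ => max 0 (1 - |s - k|)) (m + 1)
  rw [hlast, add_zero] at hext
  rw [← hext, Finset.sum_eq_add j (j + 1) (by omega) (fun k _ hk => hzero k hk.1 hk.2)
      (fun h => absurd (Finset.mem_range.2 (by omega)) h)
      (fun h => absurd (Finset.mem_range.2 (by omega)) h)]
  rw [abs_of_nonneg (sub_nonneg.2 hj), abs_of_neg (by push_cast; linarith),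
    max_eq_right (by linarith), max_eq_right (by push_cast; linarith)]
  push_cast
  ring

def tent (m k : ℕ) : C(I, ℝ) := ⟨fun x => max 0 (1 - |(m : ℝ) * x - k|), by fun_prop⟩

lemma tent_nonneg (m k : ℕ) (x : I) : 0 ≤ tent m k x := le_max_left _ _

lemma sum_tent_eq_one (m : ℕ) (x : I) : ∑ k : Fin (m + 1), tent m k x = 1 := by
  rw [Fin.sum_univ_eq_sum_range (fun k => tent m k x)]
  exact sum_range_max_zero_one_sub_abs (mul_nonneg (Nat.cast_nonneg m) x.2.1)
    (mul_le_of_le_one_right (Nat.cast_nonneg m) x.2.2)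

lemma dist_gridPt_le_of_tent_ne_zero {m k : ℕ} (hm : 0 < m) (hk : k ≤ m) {x : I}
    (h : tent m k x ≠ 0) : dist (gridPt m k) x ≤ (m : ℝ)⁻¹ := by
  have hm' : (0 : ℝ) < m := Nat.cast_pos.2 hm
  have hlt : |(m : ℝ) * x - k| < 1 := by
    by_contra! hge
    exact h (max_eq_left (by linarith))
  rw [Subtype.dist_eq, coe_gridPt hk, Real.dist_eq,
    show (k : ℝ) / m - x = -((m * x - k) / m) by field_simp; ring, abs_neg, abs_div,
    abs_of_pos hm', div_le_iff₀ hm', inv_mul_cancel₀ hm'.ne']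
  exact hlt.le

def interpolate (m : ℕ) : C(Fin (m + 1) → ℝ, C(I, ℝ)) :=
  ⟨fun v => ∑ k, v k • tent m k, by fun_prop⟩

end Interpolation

def sample {k : ℕ} (t : Fin k → I) : C(C(I, ℝ), Fin k → ℝ) :=
  ⟨fun f i => f (t i), by fun_prop⟩

lemma norm_sample_le {k : ℕ} (t : Fin k → I) (f : C(I, ℝ)) : ‖sample t f‖ ≤ ‖f‖ :=
  (pi_norm_le_iff_of_nonneg (norm_nonneg f)).2 fun i => f.norm_coe_le_norm (t i)

lemma dist_interpolate_sample_le {m : ℕ} (hm : 0 < m) {f : C(I, ℝ)} {c : ℝ} (hc : 0 ≤ c)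
    (hf : f ∈ modulusLE (m : ℝ)⁻¹ c) : dist (interpolate m (sample (grid m) f)) f ≤ c := by
  refine (ContinuousMap.dist_le hc).2 fun x => ?_
  have hx : interpolate m (sample (grid m) f) x - f x
      = ∑ k : Fin (m + 1), (f (grid m k) - f x) * tent m k x := by
    simp [interpolate, sample, sub_mul, Finset.sum_sub_distrib, ← Finset.mul_sum,
      sum_tent_eq_one]
  have hterm : ∀ k : Fin (m + 1), |f (grid m k) - f x| * tent m k x ≤ c * tent m k x := by
    intro k
    by_cases h0 : tent m k x = 0
    · simp [h0]
    · exact mul_le_mul_of_nonneg_right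
        (hf _ _ (dist_gridPt_le_of_tent_ne_zero hm k.is_le h0)) (tent_nonneg m k x)
  calc dist (interpolate m (sample (grid m) f) x) (f x)
      = |∑ k : Fin (m + 1), (f (grid m k) - f x) * tent m k x| := by rw [Real.dist_eq, hx]
    _ ≤ ∑ k : Fin (m + 1), |f (grid m k) - f x| * tent m k x := by
        refine (Finset.abs_sum_le_sum_abs _ _).trans_eq (Finset.sum_congr rfl fun k _ => ?_)
        rw [abs_mul, abs_of_nonneg (tent_nonneg m k x)]
    _ ≤ ∑ k : Fin (m + 1), c * tent m k x := Finset.sum_le_sum fun k _ => hterm k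
    _ = c := by rw [← Finset.mul_sum, sum_tent_eq_one, mul_one]

lemma tendstoUniformlyOn_interpolate_sample {K : Set C(I, ℝ)} (hK : IsCompact K) :
    TendstoUniformlyOn (fun m f => interpolate m (sample (grid m) f)) id atTop K := by
  rw [Metric.tendstoUniformlyOn_iff]
  intro c hc
  obtain ⟨m₀, hm₀⟩ := hK.exists_nat_subset_modulusLE (half_pos hc)
  filter_upwards [eventually_gt_atTop m₀] with m hm f hf
  have hinv : (m : ℝ)⁻¹ ≤ ((m₀ : ℝ) + 1)⁻¹ :=
    inv_anti₀ (by positivity) (by exact_mod_cast hm)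
  rw [dist_comm]
  exact (dist_interpolate_sample_le (by omega) (half_pos hc).le
    (modulusLE_mono hinv le_rfl (hm₀ hf))).trans_lt (half_lt_self hc)

lemma Monotone.norm_le_norm_sample_grid_one {f : C(I, ℝ)} (hf : Monotone f) :
    ‖f‖ ≤ ‖sample (grid 1) f‖ := by
  refine (ContinuousMap.norm_le _ (norm_nonneg _)).2 fun x => ?_
  have h0 : f (grid 1 0) ≤ f x := hf (gridPt_le (by simpa using x.2.1))
  have h1 : f x ≤ f (grid 1 1) := hf (le_gridPt (by simpa using x.2.2))
  exact (abs_le_max_abs_abs h0 h1).trans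
    (max_le (norm_le_pi_norm (sample (grid 1) f) 0) (norm_le_pi_norm (sample (grid 1) f) 1))

def TendstoFinDimDistrib [MeasurableSpace C(I, ℝ)] (μ : ℕ → Measure C(I, ℝ))
    (ν : Measure C(I, ℝ)) : Prop :=
  ∀ k (t : Fin k → I), Monotone t → ∀ F : (Fin k → ℝ) →ᵇ ℝ,
    Tendsto (fun n => ∫ f, F (sample t f) ∂μ n) atTop (𝓝 (∫ f, F (sample t f) ∂ν))

namespace TendstoFinDimDistrib

variable [MeasurableSpace C(I, ℝ)] [BorelSpace C(I, ℝ)] {μ : ℕ → Measure C(I, ℝ)}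
  [∀ n, IsProbabilityMeasure (μ n)] {ν : Measure C(I, ℝ)} [IsProbabilityMeasure ν]

lemma eventually_measure_lt (h : TendstoFinDimDistrib μ ν) {k : ℕ} {t : Fin k → I}
    (ht : Monotone t) {F : Set (Fin k → ℝ)} (hF : IsClosed F) {e : ℝ≥0∞}
    (he : ν (sample t ⁻¹' F) < e) : ∀ᶠ n in atTop, μ n (sample t ⁻¹' F) < e := by
  have hs := (sample t).continuous.measurable
  have := Measure.isProbabilityMeasure_map (μ := ν) hs.aemeasurable
  have := fun n => Measure.isProbabilityMeasure_map (μ := μ n) hs.aemeasurable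
  simp only [← Measure.map_apply hs hF.measurableSet] at he ⊢
  refine eventually_measure_lt_of_tendsto_integral (fun F => ?_) hF he
  simpa only [integral_map hs.aemeasurable F.continuous.aestronglyMeasurable]
    using h k t ht F

lemma exists_eventually_measure_compl_closedBall_le (h : TendstoFinDimDistrib μ ν)
    (hmono : ∀ n, ∀ᵐ f : C(I, ℝ) ∂μ n, Monotone f) {e : ℝ≥0∞} (he : 0 < e) :
    ∃ M : ℝ, ∀ᶠ n in atTop, μ n (closedBall (0 : C(I, ℝ)) M)ᶜ ≤ e := by
  obtain ⟨M, hM⟩ := (isTightMeasureSet_singleton (μ := ν)).exists_measure_compl_lt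
    (S := fun M : ℝ => ball (0 : C(I, ℝ)) M) (fun K hK => hK.isBounded.subset_ball 0) he
  have hF : IsClosed (ball (0 : Fin 2 → ℝ) M)ᶜ := isOpen_ball.isClosed_compl
  have hνF : ν (sample (grid 1) ⁻¹' (ball 0 M)ᶜ) < e := by
    have hsub : sample (grid 1) ⁻¹' (ball 0 M)ᶜ ⊆ (ball (0 : C(I, ℝ)) M)ᶜ := fun f hf hfM =>
      hf (mem_ball_zero_iff.2 ((norm_sample_le _ f).trans_lt (mem_ball_zero_iff.1 hfM)))
    exact (measure_mono hsub).trans_lt hM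
  refine ⟨M, (h.eventually_measure_lt (monotone_grid 1) hF hνF).mono fun n hn => ?_⟩
  refine (measure_mono_ae ?_).trans hn.le
  filter_upwards [hmono n] with f hfm hfM hf
  exact hfM (mem_closedBall_zero_iff.2 ((hfm.norm_le_norm_sample_grid_one).trans
    (mem_ball_zero_iff.1 hf).le))

lemma exists_eventually_measure_compl_modulusLE_le (h : TendstoFinDimDistrib μ ν)
    (hmono : ∀ n, ∀ᵐ f : C(I, ℝ) ∂μ n, Monotone f) {c : ℝ} (hc : 0 < c) {e : ℝ≥0∞}
    (he : 0 < e) :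
    ∃ m : ℕ, ∀ᶠ n in atTop, μ n (modulusLE ((m : ℝ) + 1)⁻¹ c : Set C(I, ℝ))ᶜ ≤ e := by
  obtain ⟨m, hm⟩ := (isTightMeasureSet_singleton (μ := ν)).exists_measure_compl_lt
    (S := fun m : ℕ => (modulusLE ((m : ℝ) + 1)⁻¹ (c / 4) : Set C(I, ℝ)))
    (fun K hK => hK.exists_nat_subset_modulusLE (by positivity)) he
  set F : Set (Fin (m + 2) → ℝ) := ⋃ k : Fin (m + 1), {v | c / 2 ≤ |v k.succ - v k.castSucc|}
  have hF : IsClosed F :=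
    isClosed_iUnion_of_finite fun k => isClosed_le continuous_const (by fun_prop)
  have hνF : ν (sample (grid (m + 1)) ⁻¹' F) < e := by
    refine (measure_mono fun f hf hfm => ?_).trans_lt hm
    obtain ⟨k, hk⟩ := mem_iUnion.1 hf
    have hd : dist (grid (m + 1) k.succ) (grid (m + 1) k.castSucc) ≤ ((m : ℝ) + 1)⁻¹ := by
      have := dist_gridPt_succ_le (m + 1) k
      push_cast at this
      exact this
    have := hfm _ _ hd
    rw [Real.dist_eq] at this
    exact absurd (hk.trans this) (by linarith)
  refine ⟨m, (h.eventually_measure_lt (monotone_grid (m + 1)) hF hνF).mono fun n hn => ?_⟩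
  refine (measure_mono_ae ?_).trans hn.le
  filter_upwards [hmono n] with f hfm hfc
  by_contra hfF
  have hjump : ∀ k < m + 1, f (gridPt (m + 1) (k + 1)) - f (gridPt (m + 1) k) ≤ c / 2 := by
    intro k hk
    by_contra! hlt
    exact hfF (mem_iUnion.2 ⟨⟨k, hk⟩, hlt.le.trans (le_abs_self _)⟩)
  have := hfm.mem_modulusLE_of_gridPt m.succ_pos hjump
  push_cast at this
  rw [mul_div_cancel₀ c two_ne_zero] at this
  exact hfc this

theorem isTightMeasureSet_range (h : TendstoFinDimDistrib μ ν)
    (hmono : ∀ n, ∀ᵐ f : C(I, ℝ) ∂μ n, Monotone f) : IsTightMeasureSet (range μ) := by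
  have hμ : ∀ n, IsTightMeasureSet {μ n} := fun n => isTightMeasureSet_singleton
  refine isTightMeasureSet_of_forall_modulusLE (fun e he => ?_) fun c hc e he => ?_
  · obtain ⟨M, hM⟩ := exists_forall_measure_compl_le hμ
      (S := fun M : ℝ => closedBall (0 : C(I, ℝ)) M)
      (fun _ _ hab => closedBall_subset_closedBall hab)
      (fun K hK => hK.isBounded.subset_closedBall 0) he
      (h.exists_eventually_measure_compl_closedBall_le hmono he)
    exact ⟨M, forall_mem_range.2 hM⟩
  · obtain ⟨m, hm⟩ := exists_forall_measure_compl_le hμ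
      (monotone_modulusLE_nat (α := I) (β := ℝ) c)
      (fun K hK => hK.exists_nat_subset_modulusLE hc) he
      (h.exists_eventually_measure_compl_modulusLE_le hmono hc he)
    exact ⟨_, by positivity, forall_mem_range.2 hm⟩

theorem tendsto_integral (h : TendstoFinDimDistrib μ ν)
    (hmono : ∀ n, ∀ᵐ f : C(I, ℝ) ∂μ n, Monotone f) (g : C(I, ℝ) →ᵇ ℝ) :
    Tendsto (fun n => ∫ f, g f ∂μ n) atTop (𝓝 (∫ f, g f ∂ν)) :=
  tendsto_integral_of_isTightMeasureSet (h.isTightMeasureSet_range hmono)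
    isTightMeasureSet_singleton
    (h := fun m => g.compContinuous ((interpolate m).comp (sample (grid m))))
    (fun m => g.norm_compContinuous_le _)
    (fun K hK => g.continuous.comp_tendstoUniformlyOn_of_isCompact (by simpa using hK)
      (tendstoUniformlyOn_interpolate_sample hK))
    fun m => h (m + 1) (grid m) (monotone_grid m) (g.compContinuous (interpolate m))

end TendstoFinDimDistrib

/-- **Lemma 5 (ii) of the paper.**  Let `(X n)` be a sequence of random elements of
`C([0,1], ℝ)` which are almost surely monotone (nondecreasing) functions on `[0,1]`.  If
the finite-dimensional distributions of `X n` converge to those of a random element `Y` of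
`C([0,1], ℝ)` (i.e. for every `k` and every nondecreasing tuple `t : Fin k → [0,1]`, the
vector `(X n (t 1), …, X n (t k))` converges in distribution to `(Y (t 1), …, Y (t k))` in
`ℝ^k`), then the family of laws of `(X n)` is tight in `C([0,1], ℝ)` and consequently `X n`
converges in distribution to `Y` in `C([0,1], ℝ)` with the uniform topology.  Convergence
in distribution is expressed by convergence of the integrals of every bounded continuous
test function. -/
theorem monotone_fdd_convergence_implies_tight_and_weak_convergence
    [MeasurableSpace C(unitInterval, ℝ)] [BorelSpace C(unitInterval, ℝ)]
    (Ω : ℕ → Type*) [∀ n, MeasureSpace (Ω n)]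
    [∀ n, IsProbabilityMeasure (ℙ : Measure (Ω n))]
    {Ω' : Type*} [MeasureSpace Ω'] [IsProbabilityMeasure (ℙ : Measure Ω')]
    (X : ∀ n, Ω n → C(unitInterval, ℝ)) (hXmeas : ∀ n, Measurable (X n))
    (hmono : ∀ n, ∀ᵐ ω ∂(ℙ : Measure (Ω n)), Monotone (X n ω))
    (Y : Ω' → C(unitInterval, ℝ)) (hYmeas : Measurable Y)
    (hfdd : ∀ (k : ℕ) (t : Fin k → unitInterval), Monotone t →
      ∀ f : (Fin k → ℝ) →ᵇ ℝ,
        Tendsto (fun n => ∫ ω, f (fun i => X n ω (t i)) ∂ℙ) atTop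
          (𝓝 (∫ ω, f (fun i => Y ω (t i)) ∂ℙ))) :
    IsTightFamily (fun n => Measure.map (X n) ℙ) ∧
      ∀ g : C(unitInterval, ℝ) →ᵇ ℝ,
        Tendsto (fun n => ∫ ω, g (X n ω) ∂ℙ) atTop (𝓝 (∫ ω, g (Y ω) ∂ℙ)) := by
  have := fun n =>
    Measure.isProbabilityMeasure_map (μ := (ℙ : Measure (Ω n))) (hXmeas n).aemeasurable
  have := Measure.isProbabilityMeasure_map (μ := (ℙ : Measure Ω')) hYmeas.aemeasurable
  have hlaw : TendstoFinDimDistrib (fun n => Measure.map (X n) ℙ) (Measure.map Y ℙ) :=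
    fun k t ht F => by
      have hF := (F.continuous.comp (sample t).continuous).measurable
      have hX : ∀ n, ∫ f, F (sample t f) ∂(Measure.map (X n) ℙ)
          = ∫ ω, F (fun i => X n ω (t i)) ∂ℙ :=
        fun n => integral_map (hXmeas n).aemeasurable hF.aestronglyMeasurable
      have hY : ∫ f, F (sample t f) ∂(Measure.map Y ℙ) = ∫ ω, F (fun i => Y ω (t i)) ∂ℙ :=
        integral_map hYmeas.aemeasurable hF.aestronglyMeasurable
      simpa only [hX, hY] using hfdd k t ht F
  have hmono_law : ∀ n, ∀ᵐ f : C(I, ℝ) ∂(Measure.map (X n) ℙ), Monotone f := fun n =>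
    (ae_map_iff (hXmeas n).aemeasurable
      ((isClosed_monotone.preimage (by fun_prop)).measurableSet)).2 (hmono n)
  refine ⟨(hlaw.isTightMeasureSet_range hmono_law).isTightFamily, fun g => ?_⟩
  simpa only [integral_map (hXmeas _).aemeasurable g.continuous.aestronglyMeasurable,
    integral_map hYmeas.aemeasurable g.continuous.aestronglyMeasurable]
    using hlaw.tendsto_integral hmono_law g
end
end
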